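/- arXiv:2012.13573 — 5 statements merged into one kernel-verified Lean document; each statement's English description precedes it below -/
import Mathlib

section
/- Let (H, 𝔉) be a measurable space, let μ and ν be probability measures on H, and let ε, δ ≥ 0 be such that for every measurable set B ⊆ H both μ(B) ≤ e^ε·ν(B) + δ and ν(B) ≤ e^ε·μ(B) + δ hold. Let f : H → ℝ be measurable with 0 ≤ f(h) ≤ M for all h ∈ H, where M > 0. Then |∫ f dμ − ∫ f dν| ≤ M·δ·e^{−ε} + M·(1 − e^{−ε}). -/
/-!
By the layer-cake formula, `∫ f dμ = ∫₀^M μ{f > t} dt` for `0 ≤ f ≤ M`, so it suffices to compare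
`μ B` and `ν B` on the superlevel sets `B = {f > t}`. Multiplying `μ B ≤ e^ε ν B + δ` by `e^{-ε}`
and using `μ B ≤ 1` gives `μ B ≤ ν B + δ e^{-ε} + (1 - e^{-ε})`; integrating over `t ∈ [0, M]`
yields the bound, and symmetry of the hypothesis gives the absolute value.
-/

open MeasureTheory Real Set

section

variable {α : Type*} [MeasurableSpace α] {μ ν : Measure α}

theorem measureReal_le_add_of_le_exp_mul_add [IsZeroOrProbabilityMeasure μ] [IsFiniteMeasure ν]
    {ε δ : ℝ} (hε : 0 ≤ ε) (hδ : 0 ≤ δ) {B : Set α}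
    (h : μ B ≤ ENNReal.ofReal (exp ε) * ν B + ENNReal.ofReal δ) :
    μ.real B ≤ ν.real B + (δ * exp (-ε) + (1 - exp (-ε))) := by
  have hreal : μ.real B ≤ exp ε * ν.real B + δ := by
    have := ENNReal.toReal_mono (by finiteness) h
    rwa [ENNReal.toReal_add (by finiteness) (by finiteness), ENNReal.toReal_mul,
      ENNReal.toReal_ofReal (exp_pos ε).le, ENNReal.toReal_ofReal hδ] at this
  have hexp : exp (-ε) * exp ε = 1 := by rw [← exp_add, neg_add_cancel, exp_zero]
  have hcoef : 0 ≤ 1 - exp (-ε) := sub_nonneg.mpr (exp_le_one_iff.mpr (neg_nonpos.mpr hε))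
  calc μ.real B = exp (-ε) * μ.real B + (1 - exp (-ε)) * μ.real B := by ring
    _ ≤ exp (-ε) * (exp ε * ν.real B + δ) + (1 - exp (-ε)) * 1 := by
        gcongr
        exact measureReal_le_one
    _ = ν.real B + (δ * exp (-ε) + (1 - exp (-ε))) := by linear_combination ν.real B * hexp

theorem antitone_measureReal_lt [IsFiniteMeasure μ] (f : α → ℝ) :
    Antitone fun t => μ.real {a | t < f a} :=
  fun _ _ hst => measureReal_mono fun _ ha => hst.trans_lt ha

theorem integral_eq_intervalIntegral_measureReal_lt [IsFiniteMeasure μ] {f : α → ℝ} {M : ℝ}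
    (hf : AEStronglyMeasurable f μ) (hf0 : ∀ a, 0 ≤ f a) (hfM : ∀ a, f a ≤ M) (hM : 0 ≤ M) :
    ∫ a, f a ∂μ = ∫ t in (0)..M, μ.real {a | t < f a} := by
  have hint : Integrable f μ :=
    .of_bound hf M (ae_of_all _ fun a => by rw [norm_of_nonneg (hf0 a)]; exact hfM a)
  rw [hint.integral_eq_integral_meas_lt (ae_of_all _ hf0), intervalIntegral.integral_of_le hM]
  refine setIntegral_eq_of_subset_of_forall_sdiff_eq_zero measurableSet_Ioi Ioc_subset_Ioi_self ?_
  rintro t ⟨ht0, htM⟩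
  have hMt : M < t := lt_of_not_ge fun h => htM ⟨ht0, h⟩
  have hempty : {a | t < f a} = ∅ :=
    eq_empty_of_forall_notMem fun a ha => (hfM a).not_gt (hMt.trans ha)
  rw [hempty, measureReal_empty]

theorem integral_sub_integral_le_of_measureReal_lt_le [IsFiniteMeasure μ] [IsFiniteMeasure ν]
    {f : α → ℝ} {M c : ℝ} (hfμ : AEStronglyMeasurable f μ) (hfν : AEStronglyMeasurable f ν)
    (hf0 : ∀ a, 0 ≤ f a) (hfM : ∀ a, f a ≤ M) (hM : 0 ≤ M)
    (h : ∀ t, μ.real {a | t < f a} ≤ ν.real {a | t < f a} + c) :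
    ∫ a, f a ∂μ - ∫ a, f a ∂ν ≤ M * c := by
  have hν := (antitone_measureReal_lt (μ := ν) f).intervalIntegrable (μ := volume) (a := 0) (b := M)
  rw [integral_eq_intervalIntegral_measureReal_lt hfμ hf0 hfM hM,
    integral_eq_intervalIntegral_measureReal_lt hfν hf0 hfM hM, sub_le_iff_le_add']
  calc ∫ t in (0)..M, μ.real {a | t < f a}
      ≤ ∫ t in (0)..M, (ν.real {a | t < f a} + c) :=
        intervalIntegral.integral_mono_on hM (antitone_measureReal_lt f).intervalIntegrable
          (hν.add intervalIntegrable_const) fun t _ => h t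
    _ = (∫ t in (0)..M, ν.real {a | t < f a}) + M * c := by
        rw [intervalIntegral.integral_add hν intervalIntegrable_const,
          intervalIntegral.integral_const, sub_zero, smul_eq_mul]

end

/-- Stability–privacy lemma: if two probability measures satisfy a two-sided
(ε,δ)-differential-privacy inequality, then the expectations of any loss bounded
in [0, M] differ by at most M·δ·e^{−ε} + M·(1 − e^{−ε}). -/
theorem stability_privacy
    {H : Type*} [MeasurableSpace H]
    (μ ν : Measure H) [IsProbabilityMeasure μ] [IsProbabilityMeasure ν]
    (ε δ M : ℝ) (hε : 0 ≤ ε) (hδ : 0 ≤ δ) (hM : 0 < M)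
    (hdp : ∀ B : Set H, MeasurableSet B →
      μ B ≤ ENNReal.ofReal (Real.exp ε) * ν B + ENNReal.ofReal δ ∧
      ν B ≤ ENNReal.ofReal (Real.exp ε) * μ B + ENNReal.ofReal δ)
    (f : H → ℝ) (hf : Measurable f)
    (hf0 : ∀ h, 0 ≤ f h) (hfM : ∀ h, f h ≤ M) :
    |∫ h, f h ∂μ - ∫ h, f h ∂ν| ≤ M * δ * Real.exp (-ε) + M * (1 - Real.exp (-ε)) := by
  have hB (t : ℝ) : MeasurableSet {a | t < f a} := measurableSet_lt measurable_const hf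
  rw [abs_sub_le_iff, mul_assoc, ← mul_add]
  constructor
  · exact integral_sub_integral_le_of_measureReal_lt_le hf.aestronglyMeasurable
      hf.aestronglyMeasurable hf0 hfM hM.le fun t =>
        measureReal_le_add_of_le_exp_mul_add hε hδ (hdp _ (hB t)).1
  · exact integral_sub_integral_le_of_measureReal_lt_le hf.aestronglyMeasurable
      hf.aestronglyMeasurable hf0 hfM hM.le fun t =>
        measureReal_le_add_of_le_exp_mul_add hε hδ (hdp _ (hB t)).2
end

section
/- Let (H, 𝔉) be a measurable space, let μ and ν be probability measures on H, and let ε ≥ 0 be such that for every measurable set B ⊆ H both μ(B) ≤ e^ε·ν(B) and ν(B) ≤ e^ε·μ(B) hold. Let f : H → ℝ be measurable with 0 ≤ f(h) ≤ M for all h ∈ H, where M > 0. Then |∫ f dμ − ∫ f dν| ≤ M·(1 − e^{−ε}). -/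
open MeasureTheory Real

/-- Pure-DP stability–privacy lemma: if two probability measures satisfy a two-sided
ε-differential-privacy inequality, then the expectations of any loss bounded in
[0, M] differ by at most M·(1 − e^{−ε}). -/
theorem stability_pure_privacy
    {H : Type*} [MeasurableSpace H]
    (μ ν : Measure H) [IsProbabilityMeasure μ] [IsProbabilityMeasure ν]
    (ε M : ℝ) (hε : 0 ≤ ε) (hM : 0 < M)
    (hdp : ∀ B : Set H, MeasurableSet B →
      μ B ≤ ENNReal.ofReal (Real.exp ε) * ν B ∧
      ν B ≤ ENNReal.ofReal (Real.exp ε) * μ B)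
    (f : H → ℝ) (hf : Measurable f)
    (hf0 : ∀ h, 0 ≤ f h) (hfM : ∀ h, f h ≤ M) :
    |∫ h, f h ∂μ - ∫ h, f h ∂ν| ≤ M * (1 - Real.exp (-ε)) := by
  have hc : ENNReal.ofReal (Real.exp (-ε)) * ENNReal.ofReal (Real.exp ε) = 1 := by
    rw [← ENNReal.ofReal_mul (Real.exp_nonneg _), ← Real.exp_add]
    simp
  have hle : ∀ p q : Measure H, (∀ B : Set H, MeasurableSet B →
      p B ≤ ENNReal.ofReal (Real.exp ε) * q B) →
      (ENNReal.ofReal (Real.exp (-ε))) • p ≤ q := by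
    intro p q hpq
    rw [Measure.le_iff]
    intro s hs
    rw [Measure.smul_apply, smul_eq_mul]
    calc ENNReal.ofReal (Real.exp (-ε)) * p s
        ≤ ENNReal.ofReal (Real.exp (-ε)) * (ENNReal.ofReal (Real.exp ε) * q s) :=
          mul_le_mul_right (hpq s hs) _
      _ = q s := by rw [← mul_assoc, hc, one_mul]
  have hint : ∀ (p : Measure H) [IsFiniteMeasure p], Integrable f p := by
    intro p _
    exact (integrable_const M).mono' hf.aestronglyMeasurable
      (ae_of_all _ fun h => by
        rw [Real.norm_eq_abs, abs_of_nonneg (hf0 h)]; exact hfM h)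
  have key : ∀ (p q : Measure H) [IsProbabilityMeasure p] [IsProbabilityMeasure q],
      ((ENNReal.ofReal (Real.exp (-ε))) • p ≤ q) →
      Real.exp (-ε) * ∫ h, f h ∂p ≤ ∫ h, f h ∂q := by
    intro p q _ _ h
    have := integral_mono_measure h (ae_of_all _ hf0) (hint q)
    rwa [integral_smul_measure, ENNReal.toReal_ofReal (Real.exp_nonneg _),
      smul_eq_mul] at this
  have h1 := key ν μ (hle ν μ fun B hB => (hdp B hB).2)
  have h2 := key μ ν (hle μ ν fun B hB => (hdp B hB).1)
  have hbM : ∀ (p : Measure H) [IsProbabilityMeasure p],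
      0 ≤ ∫ h, f h ∂p ∧ ∫ h, f h ∂p ≤ M := by
    intro p _
    constructor
    · exact integral_nonneg hf0
    · calc ∫ h, f h ∂p ≤ ∫ _, M ∂p := integral_mono (hint p) (integrable_const M) hfM
        _ = M := by simp
  obtain ⟨ha0, haM⟩ := hbM μ
  obtain ⟨hb0, hbM'⟩ := hbM ν
  have he1 : Real.exp (-ε) ≤ 1 := Real.exp_le_one_iff.mpr (by linarith)
  rw [abs_le]
  constructor <;> nlinarith [Real.exp_pos (-ε)]
end

section
/- Let (H, 𝔉) be a measurable space, let μ and ν be probability measures on H, and let ε, δ ≥ 0 be such that μ(B) ≤ e^ε·ν(B) + δ for every measurable set B ⊆ H. Let f : H → ℝ be measurable with 0 ≤ f(h) ≤ M for all h ∈ H, where M > 0. Then ∫ f dμ ≤ e^ε·∫ f dν + M·δ. -/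
open MeasureTheory Real Set

/-! Write both integrals in layer-cake form `∫ f dm = ∫₀^M m{f ≥ t} dt`. The hypothesis bounds
the integrand `μ{f ≥ t}` pointwise by `e^ε ν{f ≥ t} + δ`, and integrating this bound over
`(0, M]` gives `e^ε ∫ f dν + M δ`. -/

lemma ENNReal.toReal_le_mul_add_of_le {x y : ENNReal} {c d : ℝ} (hc : 0 ≤ c) (hd : 0 ≤ d)
    (hy : y ≠ ⊤) (h : x ≤ ENNReal.ofReal c * y + ENNReal.ofReal d) :
    x.toReal ≤ c * y.toReal + d := by
  refine ENNReal.toReal_le_of_le_ofReal (by positivity) (h.trans_eq ?_)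
  rw [ENNReal.ofReal_add (by positivity) hd, ENNReal.ofReal_mul hc, ENNReal.ofReal_toReal hy]

lemma integrableOn_measureReal_setOf_le {α : Type*} [MeasurableSpace α] (μ : Measure α)
    [IsFiniteMeasure μ] (f : α → ℝ) (a b : ℝ) :
    IntegrableOn (fun t ↦ μ.real {x | t ≤ f x}) (Ioc a b) :=
  have hanti : Antitone fun t ↦ μ.real {x | t ≤ f x} :=
    fun _ _ hst ↦ measureReal_mono fun _ hx ↦ hst.trans hx
  (hanti.locallyIntegrable.integrableOn_isCompact isCompact_Icc).mono_set Ioc_subset_Icc_self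

theorem integral_le_mul_integral_add_of_measure_le {α : Type*} [MeasurableSpace α]
    {μ ν : Measure α} [IsFiniteMeasure μ] [IsFiniteMeasure ν] {c d M : ℝ}
    (hc : 0 ≤ c) (hd : 0 ≤ d) (hM : 0 ≤ M)
    (h : ∀ s, MeasurableSet s → μ s ≤ ENNReal.ofReal c * ν s + ENNReal.ofReal d)
    {f : α → ℝ} (hf : Measurable f) (hf0 : ∀ x, 0 ≤ f x) (hfM : ∀ x, f x ≤ M) :
    ∫ x, f x ∂μ ≤ c * ∫ x, f x ∂ν + M * d := by
  have layer_cake (m : Measure α) [IsFiniteMeasure m] :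
      ∫ x, f x ∂m = ∫ t in Ioc 0 M, m.real {x | t ≤ f x} := by
    have hfm : Integrable f m := Integrable.of_bound hf.aestronglyMeasurable M
      (ae_of_all _ fun x ↦ (norm_of_nonneg (hf0 x)).trans_le (hfM x))
    exact hfm.integral_eq_integral_Ioc_meas_le (ae_of_all _ hf0) (ae_of_all _ hfM)
  have level_set_bound (t : ℝ) : μ.real {x | t ≤ f x} ≤ c * ν.real {x | t ≤ f x} + d :=
    ENNReal.toReal_le_mul_add_of_le hc hd (measure_ne_top _ _) (h _ (hf measurableSet_Ici))
  have hν := (integrableOn_measureReal_setOf_le ν f 0 M).const_mul c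
  have hd_int : IntegrableOn (fun _ ↦ d) (Ioc 0 M) := integrableOn_const measure_Ioc_lt_top.ne
  calc ∫ x, f x ∂μ = ∫ t in Ioc 0 M, μ.real {x | t ≤ f x} := layer_cake μ
    _ ≤ ∫ t in Ioc 0 M, (c * ν.real {x | t ≤ f x} + d) :=
        setIntegral_mono (integrableOn_measureReal_setOf_le μ f 0 M) (hν.add hd_int)
          level_set_bound
    _ = c * ∫ x, f x ∂ν + M * d := by
        rw [integral_add hν hd_int, integral_const_mul, ← layer_cake ν, setIntegral_const,
          Real.volume_real_Ioc_of_le hM, sub_zero, smul_eq_mul]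

theorem integral_transfer_dp_general
    {H : Type*} [MeasurableSpace H]
    (μ ν : Measure H) [IsProbabilityMeasure μ] [IsProbabilityMeasure ν]
    (ε δ M : ℝ) (hδ : 0 ≤ δ) (hM : 0 < M)
    (hdp : ∀ B : Set H, MeasurableSet B →
      μ B ≤ ENNReal.ofReal (Real.exp ε) * ν B + ENNReal.ofReal δ)
    (f : H → ℝ) (hf : Measurable f)
    (hf0 : ∀ h, 0 ≤ f h) (hfM : ∀ h, f h ≤ M) :
    ∫ h, f h ∂μ ≤ Real.exp ε * ∫ h, f h ∂ν + M * δ :=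
  integral_le_mul_integral_add_of_measure_le (exp_nonneg ε) hδ hM.le hdp hf hf0 hfM

/-- Integral-transfer step: a one-sided (ε,δ)-DP inequality between two probability
measures transfers to integrals of a loss bounded in [0, M]:
∫ f dμ ≤ e^ε · ∫ f dν + M·δ. -/
theorem integral_transfer_dp
    {H : Type*} [MeasurableSpace H]
    (μ ν : Measure H) [IsProbabilityMeasure μ] [IsProbabilityMeasure ν]
    (ε δ M : ℝ) (hε : 0 ≤ ε) (hδ : 0 ≤ δ) (hM : 0 < M)
    (hdp : ∀ B : Set H, MeasurableSet B →
      μ B ≤ ENNReal.ofReal (Real.exp ε) * ν B + ENNReal.ofReal δ)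
    (f : H → ℝ) (hf : Measurable f)
    (hf0 : ∀ h, 0 ≤ f h) (hfM : ∀ h, f h ≤ M) :
    ∫ h, f h ∂μ ≤ Real.exp ε * ∫ h, f h ∂ν + M * δ :=
  integral_transfer_dp_general μ ν ε δ M hδ hM hdp f hf hf0 hfM
end

section
/- Let Z be a measurable space, μ a probability measure on Z, N ≥ 1 an integer, H a measurable space, and ℓ : H × Z → ℝ a jointly measurable loss with 0 ≤ ℓ(h, z) ≤ M for all h, z, where M > 0. Let A be a Markov kernel from Z^N to H (a measurable assignment of a probability measure A(S) on H to each dataset S ∈ Z^N) that is (ε,δ)-differentially private: for every pair of datasets S, S′ ∈ Z^N that differ in exactly one coordinate and every measurable set B ⊆ H, A(S)(B) ≤ e^ε·A(S′)(B) + δ. Then the on-average generalization error satisfies E_{S ~ μ^{⊗N}} [ ∫_H ( ∫_Z ℓ(h, z) dμ(z) − (1/N)·Σ_{i=1}^N ℓ(h, S_i) ) dA(S)(h) ] ≤ M·δ·e^{−ε} + M·(1 − e^{−ε}). -/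
/-!
Privacy implies stability: if `S` and `S'` differ in one point, applying `(ε, δ)`-privacy to
`Bᶜ` gives `A(S)(B) ≤ e^{-ε} A(S')(B) + (1 - e^{-ε}) + δ e^{-ε}`; as `e^{-ε} ≤ 1`, the two output
laws are within total variation `(1 - e^{-ε}) + δ e^{-ε}`, and by the layer-cake formula a loss
with values in `[0, M]` has expectations differing by at most `M` times that.

Stability implies generalization: for a fresh sample `z`, the pair `(S, z)` has the same law as
`(S with S_i replaced by z, S_i)`, so the expected empirical loss on the `i`-th point equals the
expected loss of `A(S^{i ← z})` at `z`, while the expected risk is the expected loss of `A(S)`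
at `z`.
-/

open MeasureTheory ProbabilityTheory Set
open scoped ENNReal

section LayerCake

variable {α : Type*} [MeasurableSpace α]

theorem lintegral_le_lintegral_add_of_measure_le_add {ν κ : Measure α} {d : ℝ≥0∞}
    (hνκ : ∀ s, MeasurableSet s → ν s ≤ κ s + d) {f : α → ℝ} (hf : Measurable f)
    (hf0 : 0 ≤ f) {M : ℝ} (hfM : ∀ x, f x ≤ M) :
    ∫⁻ x, .ofReal (f x) ∂ν ≤ ∫⁻ x, .ofReal (f x) ∂κ + d * .ofReal M := by
  have hsuper : ∀ t, ν {x | t < f x} ≤ κ {x | t < f x} + (Iio M).indicator (fun _ ↦ d) t := by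
    intro t
    by_cases ht : t < M
    · simpa [ht] using hνκ _ (measurableSet_lt measurable_const hf)
    · have hempty : {x | t < f x} = ∅ :=
        eq_empty_of_forall_notMem fun x hx ↦ ht (hx.trans_le (hfM x))
      simp [hempty]
  rw [lintegral_eq_lintegral_meas_lt ν (.of_forall hf0) hf.aemeasurable,
    lintegral_eq_lintegral_meas_lt κ (.of_forall hf0) hf.aemeasurable]
  calc ∫⁻ t in Ioi 0, ν {x | t < f x}
      ≤ ∫⁻ t in Ioi 0, (κ {x | t < f x} + (Iio M).indicator (fun _ ↦ d) t) :=
        lintegral_mono fun t ↦ hsuper t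
    _ = (∫⁻ t in Ioi 0, κ {x | t < f x}) + d * .ofReal M := by
        rw [lintegral_add_right _ (measurable_const.indicator measurableSet_Iio),
          lintegral_indicator_const measurableSet_Iio, Measure.restrict_apply measurableSet_Iio,
          Iio_inter_Ioi, Real.volume_Ioo, sub_zero]

theorem integral_le_integral_add_of_measureReal_le_add {ν κ : Measure α} [IsFiniteMeasure ν]
    [IsFiniteMeasure κ] {d : ℝ} (hνκ : ∀ s, MeasurableSet s → ν.real s ≤ κ.real s + d)
    {f : α → ℝ} (hf : Measurable f) (hf0 : 0 ≤ f) {M : ℝ} (hM : 0 ≤ M) (hfM : ∀ x, f x ≤ M) :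
    ∫ x, f x ∂ν ≤ ∫ x, f x ∂κ + M * d := by
  have hd : 0 ≤ d := by simpa using hνκ ∅ .empty
  have hνκ' : ∀ s, MeasurableSet s → ν s ≤ κ s + .ofReal d := fun s hs ↦ by
    rw [← ofReal_measureReal, ← ofReal_measureReal, ← ENNReal.ofReal_add measureReal_nonneg hd]
    exact ENNReal.ofReal_le_ofReal (hνκ s hs)
  have hfin : ∫⁻ x, .ofReal (f x) ∂κ ≠ ∞ :=
    (Integrable.of_bound hf.aestronglyMeasurable M (.of_forall fun x ↦ by
      simpa [abs_of_nonneg (hf0 x)] using hfM x)).lintegral_lt_top.ne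
  rw [integral_eq_lintegral_of_nonneg_ae (.of_forall hf0) hf.aestronglyMeasurable,
    integral_eq_lintegral_of_nonneg_ae (.of_forall hf0) hf.aestronglyMeasurable]
  calc _ ≤ (∫⁻ x, .ofReal (f x) ∂κ + .ofReal d * .ofReal M).toReal :=
        ENNReal.toReal_mono (by finiteness)
          (lintegral_le_lintegral_add_of_measure_le_add hνκ' hf hf0 hfM)
    _ = _ := by
        rw [ENNReal.toReal_add hfin (by finiteness), ENNReal.toReal_mul, ENNReal.toReal_ofReal hd,
          ENNReal.toReal_ofReal hM, mul_comm]

end LayerCake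

theorem measureReal_le_add_of_measure_compl_le {H : Type*} [MeasurableSpace H] {ν κ : Measure H}
    [IsProbabilityMeasure ν] [IsProbabilityMeasure κ] {ε δ : ℝ} (hε : 0 ≤ ε) (hδ : 0 ≤ δ)
    {B : Set H} (hB : MeasurableSet B)
    (h : κ Bᶜ ≤ .ofReal (Real.exp ε) * ν Bᶜ + .ofReal δ) :
    ν.real B ≤ κ.real B + (δ * Real.exp (-ε) + (1 - Real.exp (-ε))) := by
  have hreal : κ.real Bᶜ ≤ Real.exp ε * ν.real Bᶜ + δ := by
    refine ENNReal.toReal_le_of_le_ofReal (by positivity) (h.trans_eq ?_)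
    rw [ENNReal.ofReal_add (by positivity) hδ, ENNReal.ofReal_mul (Real.exp_pos ε).le,
      ofReal_measureReal]
  rw [probReal_compl_eq_one_sub hB, probReal_compl_eq_one_sub hB] at hreal
  have hexp : Real.exp (-ε) * Real.exp ε = 1 := by
    rw [← Real.exp_add, neg_add_cancel, Real.exp_zero]
  have hexp_le : Real.exp (-ε) ≤ 1 := Real.exp_le_one_iff.mpr (neg_nonpos.mpr hε)
  have hscaled := mul_le_mul_of_nonneg_left hreal (Real.exp_pos (-ε)).le
  rw [mul_add, ← mul_assoc, hexp, one_mul] at hscaled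
  have hκ : Real.exp (-ε) * κ.real B ≤ κ.real B := mul_le_of_le_one_left measureReal_nonneg hexp_le
  linarith

theorem measurePreserving_update_swap {ι Z : Type*} [Fintype ι] [DecidableEq ι]
    [MeasurableSpace Z] (μ : Measure Z) [SigmaFinite μ] (i : ι) :
    MeasurePreserving (fun p : (ι → Z) × Z ↦ (Function.update p.1 i p.2, p.1 i))
      ((Measure.pi fun _ ↦ μ).prod μ) ((Measure.pi fun _ ↦ μ).prod μ) := by
  let E := MeasurableEquiv.piOptionEquivProd (fun _ : Option ι ↦ Z)
  have hE : MeasurePreserving E (Measure.pi fun _ ↦ μ) ((Measure.pi fun _ ↦ μ).prod μ) :=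
    (⟨E.symm.measurable, Measure.pi_map_piOptionEquivProd fun _ ↦ μ⟩ :
      MeasurePreserving E.symm _ _).symm
  have hσ := measurePreserving_arrowCongr' (fun _ ↦ μ) (fun _ ↦ μ)
    (Equiv.swap (some i) none) (MeasurableEquiv.refl Z) fun _ ↦ .id μ
  -- Transported along `E`, the map permutes the coordinates `some i` and `none`.
  convert (hE.comp hσ).comp hE.symm using 1
  have hEsymm : ∀ S z, E.symm (S, z) = fun o ↦ o.elim z S := fun S z ↦ by
    ext (_ | j) <;> rfl
  have hEapply : ∀ x, E x = (fun j ↦ x (some j), x none) := fun x ↦ rfl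
  have hσapply : ∀ x, MeasurableEquiv.arrowCongr' (Equiv.swap (some i) none)
      (MeasurableEquiv.refl Z) x = x ∘ Equiv.swap (some i) none := fun x ↦ rfl
  funext ⟨S, z⟩
  refine Prod.ext (funext fun j ↦ ?_) ?_
  · by_cases hj : j = i
    · subst hj; simp [hEsymm, hEapply, hσapply]
    · simp [hEsymm, hEapply, hσapply, hj, Equiv.swap_apply_of_ne_of_ne]
  · simp [hEsymm, hEapply, hσapply]

theorem integral_update_swap {ι Z E : Type*} [Fintype ι] [DecidableEq ι] [MeasurableSpace Z]
    [NormedAddCommGroup E] [NormedSpace ℝ E]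
    (μ : Measure Z) [IsProbabilityMeasure μ] (i : ι) (g : (ι → Z) × Z → E) :
    ∫ p, g (Function.update p.1 i p.2, p.2) ∂(Measure.pi fun _ ↦ μ).prod μ =
      ∫ S, g (S, S i) ∂Measure.pi fun _ ↦ μ := by
  let Φ := MeasurableEquiv.ofInvolutive (fun p : (ι → Z) × Z ↦ (Function.update p.1 i p.2, p.1 i))
    (fun p ↦ by simp) (by fun_prop)
  calc ∫ p, g (Function.update p.1 i p.2, p.2) ∂(Measure.pi fun _ ↦ μ).prod μ
      = ∫ p, g ((Φ p).1, (Φ p).1 i) ∂(Measure.pi fun _ ↦ μ).prod μ := by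
        congr! with p
        exact (Function.update_self i p.2 p.1).symm
    _ = ∫ q, g (q.1, q.1 i) ∂(Measure.pi fun _ ↦ μ).prod μ :=
        (measurePreserving_update_swap μ i).integral_comp Φ.measurableEmbedding
          (fun q ↦ g (q.1, q.1 i))
    _ = ∫ S, g (S, S i) ∂Measure.pi fun _ ↦ μ := by
        rw [integral_fun_fst (fun S ↦ g (S, S i)), probReal_univ, one_smul]

theorem integral_risk_sub_empiricalRisk_eq {Z H : Type*} [MeasurableSpace Z] [MeasurableSpace H]
    (μ : Measure Z) [IsFiniteMeasure μ] (ν : Measure H) [IsFiniteMeasure ν] {N : ℕ} (hN : N ≠ 0)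
    {ℓ : H → Z → ℝ} (hℓ : Measurable fun p : H × Z ↦ ℓ p.1 p.2) {C : ℝ}
    (hℓC : ∀ h z, ‖ℓ h z‖ ≤ C) (S : Fin N → Z) :
    ∫ h, ((∫ z, ℓ h z ∂μ) - (1 / (N : ℝ)) * ∑ i : Fin N, ℓ h (S i)) ∂ν =
      1 / (N : ℝ) * ∑ i : Fin N, ((∫ z, ∫ h, ℓ h z ∂ν ∂μ) - ∫ h, ℓ h (S i) ∂ν) := by
  have hℓ_int : Integrable (fun p : H × Z ↦ ℓ p.1 p.2) (ν.prod μ) :=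
    .of_bound hℓ.aestronglyMeasurable C (.of_forall fun p ↦ hℓC p.1 p.2)
  have hℓS_int : ∀ i, Integrable (fun h ↦ ℓ h (S i)) ν := fun i ↦
    .of_bound (hℓ.comp (measurable_id.prodMk measurable_const)).aestronglyMeasurable C
      (.of_forall fun h ↦ hℓC h (S i))
  rw [integral_sub hℓ_int.integral_prod_left
      ((integrable_finsetSum _ fun i _ ↦ hℓS_int i).const_mul _),
    integral_const_mul, integral_finsetSum _ fun i _ ↦ hℓS_int i, integral_integral_swap hℓ_int,
    Finset.sum_sub_distrib, Finset.sum_const, Finset.card_univ, Fintype.card_fin, nsmul_eq_mul,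
    mul_sub, ← mul_assoc, one_div, inv_mul_cancel₀ (Nat.cast_ne_zero.mpr hN), one_mul]

namespace ProbabilityTheory.Kernel

variable {ι Z H : Type*} [MeasurableSpace Z] [MeasurableSpace H]

def IsDifferentiallyPrivate (A : Kernel (ι → Z) H) (ε δ : ℝ) : Prop :=
  ∀ S S' : ι → Z, (∃ j, S j ≠ S' j ∧ ∀ i, i ≠ j → S i = S' i) →
    ∀ B : Set H, MeasurableSet B → A S B ≤ ENNReal.ofReal (Real.exp ε) * A S' B + ENNReal.ofReal δ

def IsReplaceOneStable [DecidableEq ι] (A : Kernel (ι → Z) H) (ℓ : H → Z → ℝ) (β : ℝ) : Prop :=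
  ∀ S i z, ∫ h, ℓ h z ∂A S - ∫ h, ℓ h z ∂A (Function.update S i z) ≤ β

noncomputable def onAverageGeneralizationError {N : ℕ} (A : Kernel (Fin N → Z) H) (μ : Measure Z)
    (ℓ : H → Z → ℝ) : ℝ :=
  ∫ S, (∫ h, ((∫ z, ℓ h z ∂μ) - (1 / (N : ℝ)) * ∑ i : Fin N, ℓ h (S i)) ∂(A S))
    ∂(Measure.pi fun _ : Fin N ↦ μ)

theorem IsDifferentiallyPrivate.isReplaceOneStable [DecidableEq ι]
    {A : Kernel (ι → Z) H} [IsMarkovKernel A] {ε δ : ℝ} (hA : A.IsDifferentiallyPrivate ε δ)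
    (hε : 0 ≤ ε) (hδ : 0 ≤ δ) {ℓ : H → Z → ℝ} (hℓ : ∀ z, Measurable (ℓ · z))
    (hℓ0 : ∀ h z, 0 ≤ ℓ h z) {M : ℝ} (hM : 0 ≤ M) (hℓM : ∀ h z, ℓ h z ≤ M) :
    A.IsReplaceOneStable ℓ (M * δ * Real.exp (-ε) + M * (1 - Real.exp (-ε))) := by
  intro S i z
  have hβ : M * δ * Real.exp (-ε) + M * (1 - Real.exp (-ε)) =
      M * (δ * Real.exp (-ε) + (1 - Real.exp (-ε))) := by ring
  rw [hβ]
  by_cases hz : z = S i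
  · have hexp_le : Real.exp (-ε) ≤ 1 := Real.exp_le_one_iff.mpr (neg_nonpos.mpr hε)
    rw [hz, Function.update_eq_self, sub_self]
    exact mul_nonneg hM (add_nonneg (by positivity) (sub_nonneg.mpr hexp_le))
  · have hneighbor : ∃ j, Function.update S i z j ≠ S j ∧
        ∀ k, k ≠ j → Function.update S i z k = S k :=
      ⟨i, by simpa using hz, fun k hk ↦ Function.update_of_ne hk z S⟩
    have hTV : ∀ B, MeasurableSet B →
        (A S).real B ≤
          (A (Function.update S i z)).real B + (δ * Real.exp (-ε) + (1 - Real.exp (-ε))) :=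
      fun B hB ↦ measureReal_le_add_of_measure_compl_le hε hδ hB (hA _ _ hneighbor Bᶜ hB.compl)
    have := integral_le_integral_add_of_measureReal_le_add hTV (hℓ z) (fun h ↦ hℓ0 h z) hM
      (fun h ↦ hℓM h z)
    linarith

theorem IsReplaceOneStable.onAverageGeneralizationError_le (μ : Measure Z) [IsProbabilityMeasure μ]
    {N : ℕ} (hN : N ≠ 0) {A : Kernel (Fin N → Z) H} [IsMarkovKernel A] {ℓ : H → Z → ℝ}
    (hℓ : Measurable fun p : H × Z ↦ ℓ p.1 p.2) {C : ℝ} (hℓC : ∀ h z, ‖ℓ h z‖ ≤ C) {β : ℝ}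
    (hA : A.IsReplaceOneStable ℓ β) :
    A.onAverageGeneralizationError μ ℓ ≤ β := by
  set P := Measure.pi fun _ : Fin N ↦ μ
  set G : (Fin N → Z) × Z → ℝ := fun p ↦ ∫ h, ℓ h p.2 ∂A p.1
  have hG_int : ∀ (ν : Measure ((Fin N → Z) × Z)) [IsFiniteMeasure ν], Integrable G ν := by
    intro ν _
    refine .of_bound ?_ C (.of_forall fun p ↦ ?_)
    · exact (hℓ.comp (measurable_snd.prodMk (measurable_snd.comp measurable_fst)))
        |>.stronglyMeasurable.integral_kernel_prod_right' (κ := A.comap Prod.fst measurable_fst)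
        |>.aestronglyMeasurable
    · simpa using norm_integral_le_of_norm_le_const (μ := A p.1) (.of_forall fun h ↦ hℓC h p.2)
  have hGi_int : ∀ i, Integrable (fun S ↦ G (S, S i)) P := fun i ↦
    (hG_int _).comp_measurable (measurable_id.prodMk (measurable_pi_apply i))
  have hGz_int : Integrable (fun S ↦ ∫ z, G (S, z) ∂μ) P := (hG_int _).integral_prod_left
  have hswap_int : ∀ i, Integrable (fun p ↦ G (Function.update p.1 i p.2, p.2)) (P.prod μ) :=
    fun i ↦ (hG_int _).comp_measurable (by fun_prop)
  have hterm : ∀ i, ∫ S, (∫ z, G (S, z) ∂μ - G (S, S i)) ∂P =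
      ∫ p, (G p - G (Function.update p.1 i p.2, p.2)) ∂P.prod μ := fun i ↦ by
    rw [integral_sub hGz_int (hGi_int i), integral_sub (hG_int _) (hswap_int i),
      integral_prod G (hG_int _), integral_update_swap]
  have hterm_le : ∀ i, ∫ p, (G p - G (Function.update p.1 i p.2, p.2)) ∂P.prod μ ≤ β := fun i ↦
    (integral_mono ((hG_int _).sub (hswap_int i)) (integrable_const β)
      fun p ↦ hA p.1 i p.2).trans_eq (by simp)
  calc A.onAverageGeneralizationError μ ℓ
      = ∫ S, 1 / (N : ℝ) * ∑ i : Fin N, (∫ z, G (S, z) ∂μ - G (S, S i)) ∂P :=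
        integral_congr_ae (.of_forall fun S ↦
          integral_risk_sub_empiricalRisk_eq μ (A S) hN hℓ hℓC S)
    _ = 1 / (N : ℝ) * ∑ i : Fin N, ∫ p, (G p - G (Function.update p.1 i p.2, p.2)) ∂P.prod μ := by
        rw [integral_const_mul, integral_finsetSum (f := fun i S ↦ ∫ z, G (S, z) ∂μ - G (S, S i))
          _ fun i _ ↦ hGz_int.sub (hGi_int i)]
        simp_rw [hterm]
    _ ≤ 1 / (N : ℝ) * ∑ _ : Fin N, β := by gcongr with i; exact hterm_le i
    _ = β := by
        rw [Finset.sum_const, Finset.card_univ, Fintype.card_fin, nsmul_eq_mul, ← mul_assoc,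
          one_div, inv_mul_cancel₀ (Nat.cast_ne_zero.mpr hN), one_mul]

end ProbabilityTheory.Kernel

/-- On-average generalization bound via differential privacy: an (ε,δ)-differentially
private Markov kernel from datasets of size N to hypotheses, with loss bounded in
[0, M], has on-average generalization error at most M·δ·e^{−ε} + M·(1 − e^{−ε}). -/
theorem on_average_generalization_via_dp
    {Z : Type*} [MeasurableSpace Z] (μ : Measure Z) [IsProbabilityMeasure μ]
    (N : ℕ) (hN : 1 ≤ N)
    {H : Type*} [MeasurableSpace H]
    (ℓ : H → Z → ℝ) (hℓ : Measurable fun p : H × Z => ℓ p.1 p.2)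
    (M : ℝ) (hM : 0 < M)
    (hℓ0 : ∀ h z, 0 ≤ ℓ h z) (hℓM : ∀ h z, ℓ h z ≤ M)
    (A : Kernel (Fin N → Z) H) [IsMarkovKernel A]
    (ε δ : ℝ) (hε : 0 ≤ ε) (hδ : 0 ≤ δ)
    (hdp : ∀ S S' : Fin N → Z,
      (∃ j : Fin N, S j ≠ S' j ∧ ∀ i : Fin N, i ≠ j → S i = S' i) →
      ∀ B : Set H, MeasurableSet B →
        A S B ≤ ENNReal.ofReal (Real.exp ε) * A S' B + ENNReal.ofReal δ) :
    ∫ S, (∫ h, ((∫ z, ℓ h z ∂μ) - (1 / (N : ℝ)) * ∑ i : Fin N, ℓ h (S i)) ∂(A S))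
        ∂(Measure.pi fun _ : Fin N => μ)
      ≤ M * δ * Real.exp (-ε) + M * (1 - Real.exp (-ε)) := by
  have hstable := Kernel.IsDifferentiallyPrivate.isReplaceOneStable hdp hε hδ
    (fun z ↦ hℓ.comp (measurable_id.prodMk measurable_const)) hℓ0 hM.le hℓM
  exact hstable.onAverageGeneralizationError_le μ (Nat.one_le_iff_ne_zero.mp hN) hℓ
    fun h z ↦ (Real.norm_of_nonneg (hℓ0 h z)).trans_le (hℓM h z)
end

section
/- Let X be a finite-dimensional real normed vector space, Y a metric space, ℓ : X × Y → ℝ continuous, and ρ > 0. Let (x_i, y_i) → (x_0, y_0) in X × Y, and for each i let T_i ∈ closedBall(x_i, ρ) be a maximizer of ℓ(·, y_i) over closedBall(x_i, ρ), i.e. ℓ(T_i, y_i) = max_{x′ ∈ closedBall(x_i, ρ)} ℓ(x′, y_i). Suppose T_i → T_∞. Then T_∞ ∈ closedBall(x_0, ρ) and ℓ(T_∞, y_0) = max_{x′ ∈ closedBall(x_0, ρ)} ℓ(x′, y_0). -/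
open Metric Filter

/-- Berge-maximum-type step: if (x_i, y_i) → (x_0, y_0), T_i is a maximizer of
ℓ(·, y_i) over closedBall(x_i, ρ), and T_i → T_∞, then T_∞ lies in
closedBall(x_0, ρ) and maximizes ℓ(·, y_0) over it. -/
theorem limit_of_adversarial_maximizers
    {X : Type*} [NormedAddCommGroup X] [NormedSpace ℝ X] [FiniteDimensional ℝ X]
    {Y : Type*} [MetricSpace Y]
    (ℓ : X × Y → ℝ) (hℓ : Continuous ℓ) (ρ : ℝ) (hρ : 0 < ρ)
    (x : ℕ → X) (y : ℕ → Y) (x₀ : X) (y₀ : Y)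
    (hxy : Tendsto (fun i => (x i, y i)) atTop (nhds (x₀, y₀)))
    (T : ℕ → X)
    (hTmem : ∀ i, T i ∈ closedBall (x i) ρ)
    (hTmax : ∀ i, ∀ x' ∈ closedBall (x i) ρ, ℓ (x', y i) ≤ ℓ (T i, y i))
    (Tinf : X) (hTinf : Tendsto T atTop (nhds Tinf)) :
    Tinf ∈ closedBall x₀ ρ ∧ ∀ x' ∈ closedBall x₀ ρ, ℓ (x', y₀) ≤ ℓ (Tinf, y₀) := by
  have hx : Tendsto x atTop (nhds x₀) := (continuous_fst.tendsto _).comp hxy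
  have hy : Tendsto y atTop (nhds y₀) := (continuous_snd.tendsto _).comp hxy
  constructor
  · have hd : Tendsto (fun i => dist (T i) (x i)) atTop (nhds (dist Tinf x₀)) :=
      (hTinf.dist hx)
    exact mem_closedBall.mpr (le_of_tendsto hd (Eventually.of_forall fun i =>
      mem_closedBall.mp (hTmem i)))
  · intro x' hx'
    have hmem : ∀ i, x' + (x i - x₀) ∈ closedBall (x i) ρ := by
      intro i
      rw [mem_closedBall, dist_eq_norm]
      have : x' + (x i - x₀) - x i = x' - x₀ := by abel
      rw [this, ← dist_eq_norm]
      exact mem_closedBall.mp hx'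
    have h1 : Tendsto (fun i => ℓ (x' + (x i - x₀), y i)) atTop (nhds (ℓ (x', y₀))) := by
      have : Tendsto (fun i => (x' + (x i - x₀), y i)) atTop (nhds (x', y₀)) := by
        apply Tendsto.prodMk_nhds _ hy
        have := (hx.sub_const x₀).const_add x'
        simpa using this
      exact (hℓ.tendsto _).comp this
    have h2 : Tendsto (fun i => ℓ (T i, y i)) atTop (nhds (ℓ (Tinf, y₀))) :=
      (hℓ.tendsto _).comp (hTinf.prodMk_nhds hy)
    exact le_of_tendsto_of_tendsto h1 h2 (Eventually.of_forall fun i =>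
      hTmax i _ (hmem i))
end
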